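/- arXiv:0812.2817 — 8 statements merged into one kernel-verified Lean document; each statement's English description precedes it below -/
import Mathlib

section
/- Let G be a connected multigraph with vertex set {0,1,...,n} and let f be a G-parking function. Then the sum of f over all vertices satisfies f(0) + Σ_{v=1}^n f(v) ≤ |E(G)| - |V(G)|, i.e., the quantity w(f) = |E(G)| - |V(G)| - Σ_{v=0}^n f(v) is a nonnegative integer. -/
/-!
Each vertex `v ≠ 0` is charged `f v + 1` edges. Peel off the vertices of `I = V \ {0}` one at a
time using the parking condition: the vertex `v` it supplies has `f v + 1 ≤ outdeg_I(v)`, and the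
edges from `v` to outside `I` meet no remaining vertex of `I \ {v}`. Hence `∑_{v ∈ I} (f v + 1)`
is at most the number of edges meeting `I`, which is at most `|E|`; since `f 0 = -1`, this is
the claimed bound.
-/

open Finset

/-- Number of edges of the multigraph with edge multiset `E` joining `v` to a vertex outside `I`. -/
def outdeg {V : Type} [Fintype V] [DecidableEq V] (E : Multiset (Sym2 V))
    (I : Finset V) (v : V) : ℕ :=
  Multiset.card (E.filter (fun e => ∃ w, w ∉ I ∧ e = s(v, w)))

/-- `f` is a `G`-parking function with root `r`, where `G` has edge multiset `E`. -/
def IsGPF {V : Type} [Fintype V] [DecidableEq V] (E : Multiset (Sym2 V)) (r : V)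
    (f : V → ℤ) : Prop :=
  f r = -1 ∧ ∀ I : Finset V, I.Nonempty → r ∉ I →
    ∃ v ∈ I, 0 ≤ f v ∧ f v < (outdeg E I v : ℤ)

/-- The simple graph underlying the multigraph with edge multiset `E`. -/
def mAdj {V : Type} [DecidableEq V] (E : Multiset (Sym2 V)) : SimpleGraph V :=
  SimpleGraph.fromRel (fun v w => s(v, w) ∈ E)

/-- classical parking function. -/
def IsPF (n : ℕ) (a : Fin n → ℕ) : Prop :=
  ∃ σ : Equiv.Perm (Fin n), Monotone (a ∘ σ) ∧ ∀ i : Fin n, (a ∘ σ) i ≤ i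

def IsCritMax (n : ℕ) (a : Fin n → ℕ) (i : Fin n) : Prop :=
  (univ.filter (fun k => a i < a k)).card = n - 1 - a i ∧ ∀ k, a i < a k → k < i

open scoped Classical in
noncomputable def cm (n : ℕ) (a : Fin n → ℕ) : ℕ :=
  (univ.filter (IsCritMax n a)).card

noncomputable def comps {V : Type} [Fintype V] [DecidableEq V] (M : Multiset (Sym2 V)) : ℕ :=
  Nat.card (mAdj M).ConnectedComponent

noncomputable def rk {V : Type} [Fintype V] [DecidableEq V] (M : Multiset (Sym2 V)) : ℕ :=
  Fintype.card V - comps M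

/-- Tutte polynomial (Whitney rank formula) of the multigraph with edges indexed by `ε`. -/
noncomputable def tutte {V : Type} [Fintype V] [DecidableEq V] {ε : Type} [Fintype ε]
    (ends : ε → Sym2 V) (x y : ℤ) : ℤ :=
  ∑ A : Finset ε,
    (x - 1) ^ (rk (Finset.univ.val.map ends) - rk (A.val.map ends)) *
      (y - 1) ^ (A.card - rk (A.val.map ends))

noncomputable def tutteK (n : ℕ) (x y : ℤ) : ℤ :=
  tutte (fun e : ↥(⊤ : SimpleGraph (Fin (n + 1))).edgeFinset => (e : Sym2 (Fin (n + 1)))) x y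

theorem Multiset.card_filter_add_card_filter_le {α : Type*} (s : Multiset α) {p q r : α → Prop}
    [DecidablePred p] [DecidablePred q] [DecidablePred r] (hpq : ∀ a, p a → ¬q a)
    (hpr : ∀ a, p a → r a) (hqr : ∀ a, q a → r a) :
    card (s.filter p) + card (s.filter q) ≤ card (s.filter r) := by
  rw [← card_add, filter_add_filter,
    (filter_eq_nil (p := fun a => p a ∧ q a)).2 fun a _ h => hpq a h.1 h.2, add_zero]
  exact card_le_card <| monotone_filter_right s fun a => Or.rec (hpr a) (hqr a)

section GraphParkingFunction

variable {V : Type} [Fintype V] [DecidableEq V]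

def incidentEdges (E : Multiset (Sym2 V)) (I : Finset V) : Multiset (Sym2 V) :=
  E.filter fun e => ∃ v ∈ I, v ∈ e

theorem outdeg_add_card_incidentEdges_erase_le (E : Multiset (Sym2 V)) {I : Finset V} {v : V}
    (hv : v ∈ I) :
    outdeg E I v + Multiset.card (incidentEdges E (I.erase v)) ≤
      Multiset.card (incidentEdges E I) := by
  refine Multiset.card_filter_add_card_filter_le E ?_ ?_ ?_
  · rintro _ ⟨w, hw, rfl⟩ ⟨u, hu, hue⟩
    rcases Sym2.mem_iff.1 hue with rfl | rfl
    · exact ne_of_mem_erase hu rfl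
    · exact hw (mem_of_mem_erase hu)
  · rintro _ ⟨w, -, rfl⟩
    exact ⟨v, hv, Sym2.mem_mk_left v w⟩
  · rintro e ⟨u, hu, hue⟩
    exact ⟨u, mem_of_mem_erase hu, hue⟩

theorem IsGPF.sum_add_one_le_card_incidentEdges {E : Multiset (Sym2 V)} {r : V} {f : V → ℤ}
    (hf : IsGPF E r f) (I : Finset V) (hrI : r ∉ I) :
    ∑ v ∈ I, (f v + 1) ≤ Multiset.card (incidentEdges E I) := by
  induction I using Finset.strongInduction with
  | H I ih =>
    rcases I.eq_empty_or_nonempty with rfl | hI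
    · simp
    obtain ⟨v, hvI, -, hv⟩ := hf.2 I hI hrI
    have hrest := ih (I.erase v) (erase_ssubset hvI) fun h => hrI (mem_of_mem_erase h)
    have hcard := outdeg_add_card_incidentEdges_erase_le E hvI
    rw [← add_sum_erase I _ hvI]
    omega

theorem IsGPF.sum_le_card_sub_card {E : Multiset (Sym2 V)} {r : V} {f : V → ℤ}
    (hf : IsGPF E r f) :
    ∑ v, f v ≤ (Multiset.card E : ℤ) - Fintype.card V := by
  have hbound := hf.sum_add_one_le_card_incidentEdges (univ.erase r) (notMem_erase r univ)
  have hE : Multiset.card (incidentEdges E (univ.erase r)) ≤ Multiset.card E :=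
    Multiset.card_le_card (Multiset.filter_le _ E)
  have hV : (univ.erase r).card + 1 = Fintype.card V := card_erase_add_one (mem_univ r)
  rw [sum_add_distrib, sum_const, nsmul_one] at hbound
  rw [← add_sum_erase univ f (mem_univ r), hf.1]
  omega

end GraphParkingFunction

theorem sum_gpf_le_general (n : ℕ) (E : Multiset (Sym2 (Fin (n + 1))))
    (f : Fin (n + 1) → ℤ) (hf : IsGPF E 0 f) :
    ∑ v, f v ≤ (Multiset.card E : ℤ) - (n + 1) := by
  simpa using hf.sum_le_card_sub_card

/-- for a connected multigraph `G` on `{0,...,n}` and a `G`-parking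
function `f`, the quantity `w(f) = |E| - |V| - ∑ f` is nonnegative. -/
theorem sum_gpf_le (n : ℕ) (E : Multiset (Sym2 (Fin (n + 1))))
    (hconn : (mAdj E).Connected) (f : Fin (n + 1) → ℤ) (hf : IsGPF E 0 f) :
    ∑ v, f v ≤ (Multiset.card E : ℤ) - (n + 1) :=
  sum_gpf_le_general n E f hf
end

section
/- Let G be a connected multigraph on {0,1,...,n}, let u be a neighbor of 0, let e be an edge joining 0 and u, and suppose e is neither a loop nor a bridge. Then the map sending f to the function g with g(u) = f(u) - 1 and g(w) = f(w) for w ≠ u is a bijection from the set of G-parking functions f with f(u) ≥ 1 to the set of (G - e)-parking functions, where G - e is G with the edge e deleted. -/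
open Finset

/-
Among the out-degrees `outdeg I v` with `r ∉ I ∋ v`, deleting the edge `e = {r, u}` changes only
those at `v = u`, each dropping by one. So lowering `f(u)` by one preserves every inequality
`f v < outdeg I v`, turning the `G`-parking condition with `f(u) ≥ 1` into the `(G - e)`-parking
condition; conversely a `(G - e)`-parking function `g` has `g(u) ≥ 0` (take `I = {u}`).
-/

section ParkingDeletion

variable {V : Type} [Fintype V] [DecidableEq V] {E : Multiset (Sym2 V)} {r u : V}

lemma outdeg_eq_outdeg_erase_add_single (he : s(r, u) ∈ E) {I : Finset V} (hr : r ∉ I)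
    {v : V} (hv : v ∈ I) :
    (outdeg E I v : ℤ) = outdeg (E.erase s(r, u)) I v + (Pi.single u 1 : V → ℤ) v := by
  have hleaves : (∃ w, w ∉ I ∧ s(r, u) = s(v, w)) ↔ v = u := by
    refine ⟨?_, fun hvu => ⟨r, hr, hvu ▸ Sym2.eq_swap⟩⟩
    rintro ⟨w, -, hw⟩
    rcases Sym2.eq_iff.mp hw with ⟨rfl, -⟩ | ⟨-, rfl⟩
    · exact absurd hv hr
    · rfl
  unfold outdeg
  conv_lhs => rw [← Multiset.cons_erase he, Multiset.filter_cons]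
  simp only [hleaves]
  rcases eq_or_ne v u with rfl | hvu <;> simp [add_comm, *]

lemma isGPF_erase_sub_single_iff (hru : r ≠ u) (he : s(r, u) ∈ E) {f : V → ℤ} :
    IsGPF (E.erase s(r, u)) r (f - (Pi.single u 1 : V → ℤ)) ↔ IsGPF E r f ∧ 1 ≤ f u := by
  have hdeg {I : Finset V} (hr : r ∉ I) {v : V} (hv : v ∈ I) :
      (f - (Pi.single u 1 : V → ℤ)) v < outdeg (E.erase s(r, u)) I v ↔ f v < outdeg E I v := by
    rw [outdeg_eq_outdeg_erase_add_single he hr hv, Pi.sub_apply, sub_lt_iff_lt_add]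
  have hroot : (f - (Pi.single u 1 : V → ℤ)) r = f r := by simp [hru]
  constructor
  · rintro ⟨hg0, hgI⟩
    have hfu : 1 ≤ f u := by
      obtain ⟨v, hv, hv0, -⟩ := hgI {u} (singleton_nonempty u) (by simpa using hru)
      rw [mem_singleton] at hv
      subst hv
      simpa [sub_nonneg] using hv0
    refine ⟨⟨hroot ▸ hg0, fun I hI hr => ?_⟩, hfu⟩
    obtain ⟨v, hv, hv0, hvlt⟩ := hgI I hI hr
    refine ⟨v, hv, ?_, (hdeg hr hv).mp hvlt⟩
    have hsingle : 0 ≤ (Pi.single u 1 : V → ℤ) := Pi.single_nonneg.mpr zero_le_one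
    exact hv0.trans (sub_le_self _ (hsingle v))
  · rintro ⟨⟨hf0, hfI⟩, hfu⟩
    refine ⟨hroot.trans hf0, fun I hI hr => ?_⟩
    obtain ⟨v, hv, hv0, hvlt⟩ := hfI I hI hr
    refine ⟨v, hv, ?_, (hdeg hr hv).mpr hvlt⟩
    rcases eq_or_ne v u with rfl | hvu
    · simpa using hfu
    · simpa [hvu] using hv0

end ParkingDeletion

theorem deletion_bijection_general (n : ℕ) (E : Multiset (Sym2 (Fin (n + 1))))
    (u : Fin (n + 1)) (hu : u ≠ 0)
    (he : s(0, u) ∈ E) :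
    Set.BijOn (fun f : Fin (n + 1) → ℤ => fun w => if w = u then f w - 1 else f w)
      {f | IsGPF E 0 f ∧ 1 ≤ f u}
      {g | IsGPF (E.erase s(0, u)) 0 g} := by
  have hmap : (fun f : Fin (n + 1) → ℤ => fun w => if w = u then f w - 1 else f w) =
      Equiv.subRight (Pi.single u 1 : Fin (n + 1) → ℤ) := by
    ext f w
    rcases eq_or_ne w u with rfl | hwu <;> simp [*]
  rw [hmap]
  exact Equiv.bijOn _ fun f => isGPF_erase_sub_single_iff hu.symm he

/-- deleting a non-loop non-bridge edge `e = {0,u}`, the map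
`f ↦ f - χ_u` is a bijection from `G`-parking functions with `f(u) ≥ 1`
to `(G-e)`-parking functions. -/
theorem deletion_bijection (n : ℕ) (E : Multiset (Sym2 (Fin (n + 1))))
    (hconn : (mAdj E).Connected) (u : Fin (n + 1)) (hu : u ≠ 0)
    (he : s(0, u) ∈ E) (hnb : (mAdj (E.erase s(0, u))).Connected) :
    Set.BijOn (fun f : Fin (n + 1) → ℤ => fun w => if w = u then f w - 1 else f w)
      {f | IsGPF E 0 f ∧ 1 ≤ f u}
      {g | IsGPF (E.erase s(0, u)) 0 g} :=
  deletion_bijection_general n E u hu he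
end

section
/- Let G be a connected multigraph on {0,1,...,n}, let u be a neighbor of 0, and let e be an edge joining 0 and u. Then the map sending f to its restriction away from u (i.e., g(w) = f(w) for all w ≠ u) is a bijection from the set of G-parking functions f with f(u) = 0 to the set of (G/e)-parking functions, where G/e is obtained by contracting the edge e (identifying u with 0). -/
open Finset

/-!
Contracting `e = {0, u}` does not change the outdegree of a vertex other than `0` and `u`,
once a set `I ∌ 0` of vertices of `G` is matched with its image in `G/e`. Let `f u = 0`. A set
containing `u` is witnessed by `u` itself, since `e` leaves it; any other set is witnessed in `G`
exactly when its image is witnessed in `G/e`, by the same vertex. So `f` is a `G`-parking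
function iff its restriction is a `G/e`-parking function, and extending by `0` at `u` inverts
the restriction.
-/

section Contraction

variable {V W : Type} [DecidableEq V]

def contractTo (u : V) (r : {v : V // v ≠ u}) (v : V) : {v : V // v ≠ u} :=
  if h : v = u then r else ⟨v, h⟩

@[simp]
lemma contractTo_self (u : V) (r : {v : V // v ≠ u}) : contractTo u r u = r :=
  dif_pos rfl

@[simp]
lemma contractTo_of_ne {u v : V} (r : {v : V // v ≠ u}) (hv : v ≠ u) :
    contractTo u r v = ⟨v, hv⟩ :=
  dif_neg hv

variable [Fintype V] [Fintype W] [DecidableEq W]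

lemma outdeg_erase_of_ne (E : Multiset (Sym2 V)) (I : Finset V) {v a b : V}
    (hva : v ≠ a) (hvb : v ≠ b) :
    outdeg (E.erase s(a, b)) I v = outdeg E I v := by
  by_cases hab : s(a, b) ∈ E
  · conv_rhs => rw [← Multiset.cons_erase hab]
    rw [outdeg, outdeg, Multiset.filter_cons_of_neg]
    rintro ⟨w, -, hw⟩
    rcases Sym2.eq_iff.1 hw with ⟨h, -⟩ | ⟨-, h⟩
    exacts [hva h.symm, hvb h.symm]
  · rw [Multiset.erase_of_notMem hab]

lemma outdeg_pos_of_mem {E : Multiset (Sym2 V)} {I : Finset V} {v w : V}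
    (he : s(v, w) ∈ E) (hw : w ∉ I) : 0 < outdeg E I v :=
  Multiset.card_pos_iff_exists_mem.2 ⟨s(v, w), Multiset.mem_filter.2 ⟨he, w, hw, rfl⟩⟩

lemma outdeg_map_of_fiber_eq (E : Multiset (Sym2 V)) (π : V → W) {I : Finset V}
    {I' : Finset W} (hI : ∀ a, π a ∈ I' ↔ a ∈ I) {v : V} (hv : ∀ a, π a = π v → a = v) :
    outdeg (E.map (Sym2.map π)) I' (π v) = outdeg E I v := by
  rw [outdeg, outdeg, Multiset.filter_map, Multiset.card_map]
  refine congrArg Multiset.card (Multiset.filter_congr fun e _ => ?_)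
  induction e using Sym2.ind with
  | _ a b =>
    simp only [Function.comp_apply, Sym2.map_mk]
    constructor
    · rintro ⟨w', hw', h⟩
      rcases Sym2.eq_iff.1 h with ⟨ha, hb⟩ | ⟨ha, hb⟩
      · exact ⟨b, fun hb' => hw' (hb ▸ (hI b).2 hb'), by rw [hv a ha]⟩
      · exact ⟨a, fun ha' => hw' (ha ▸ (hI a).2 ha'), by rw [hv b hb, Sym2.eq_swap]⟩
    · rintro ⟨w, hw, h⟩
      refine ⟨π w, fun h' => hw ((hI w).1 h'), ?_⟩
      rw [← Sym2.map_mk, h, Sym2.map_mk]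

/-- The edge multiset of `G/e` for `e = {r, u}`. Only one copy of `e` is removed; further
parallel copies become loops at the root, which play no role in the parking condition. -/
def contractEdge (E : Multiset (Sym2 V)) {r u : V} (hru : r ≠ u) :
    Multiset (Sym2 {v : V // v ≠ u}) :=
  (E.erase s(r, u)).map (Sym2.map (contractTo u ⟨r, hru⟩))

section
variable {E : Multiset (Sym2 V)} {r u : V} {hru : r ≠ u} {I : Finset V}
  {I' : Finset {v : V // v ≠ u}}

lemma outdeg_contractEdge (hI : ∀ a, contractTo u ⟨r, hru⟩ a ∈ I' ↔ a ∈ I) {v : V}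
    (hvu : v ≠ u) (hvr : v ≠ r) :
    outdeg (contractEdge E hru) I' ⟨v, hvu⟩ = outdeg E I v := by
  have hfiber : ∀ a, contractTo u ⟨r, hru⟩ a = contractTo u ⟨r, hru⟩ v → a = v := by
    intro a ha
    rw [contractTo_of_ne _ hvu] at ha
    by_cases hau : a = u
    · rw [hau, contractTo_self] at ha
      exact absurd (congrArg Subtype.val ha) (Ne.symm hvr)
    · rw [contractTo_of_ne _ hau] at ha
      exact congrArg Subtype.val ha
  have h := outdeg_map_of_fiber_eq (E.erase s(r, u)) _ hI hfiber
  rwa [contractTo_of_ne _ hvu, outdeg_erase_of_ne _ _ hvr hvu] at h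

lemma exists_parking_vertex_contractEdge_iff (hI : ∀ a, contractTo u ⟨r, hru⟩ a ∈ I' ↔ a ∈ I)
    (hrI : r ∉ I) (f : V → ℤ) :
    (∃ w ∈ I', 0 ≤ f w.val ∧ f w.val < (outdeg (contractEdge E hru) I' w : ℤ)) ↔
      ∃ v ∈ I, 0 ≤ f v ∧ f v < (outdeg E I v : ℤ) := by
  have hmem : ∀ w : {v : V // v ≠ u}, w ∈ I' ↔ w.val ∈ I := fun w => by
    rw [← hI, contractTo_of_ne _ w.prop]
  constructor
  · rintro ⟨w, hw, hw0, hwlt⟩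
    have hwr : w.val ≠ r := fun h => hrI (h ▸ (hmem w).1 hw)
    refine ⟨w.val, (hmem w).1 hw, hw0, ?_⟩
    rwa [← outdeg_contractEdge hI w.prop hwr]
  · rintro ⟨v, hv, hv0, hvlt⟩
    have hvu : v ≠ u := by
      rintro rfl
      apply hrI
      rw [← hI, contractTo_of_ne _ hru]
      simpa using (hI v).2 hv
    refine ⟨⟨v, hvu⟩, (hmem _).2 hv, hv0, ?_⟩
    rwa [outdeg_contractEdge hI hvu (fun h => hrI (h ▸ hv))]

end

theorem isGPF_contractEdge_iff {E : Multiset (Sym2 V)} {r u : V} (hru : r ≠ u)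
    (he : s(r, u) ∈ E) {f : V → ℤ} (hfu : f u = 0) :
    IsGPF (contractEdge E hru) ⟨r, hru⟩ (fun w => f w.val) ↔ IsGPF E r f := by
  refine ⟨fun ⟨hfr, hpark⟩ => ⟨hfr, fun I hI hrI => ?_⟩,
    fun ⟨hfr, hpark⟩ => ⟨hfr, fun I' hI' hrI' => ?_⟩⟩
  · by_cases huI : u ∈ I
    · -- `u` parks: `f u = 0` and the edge `e` leaves `I` towards the root.
      refine ⟨u, huI, hfu.ge, ?_⟩
      rw [hfu, Nat.cast_pos]
      exact outdeg_pos_of_mem (Sym2.eq_swap ▸ he) hrI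
    · have hI' : ∀ a, contractTo u ⟨r, hru⟩ a ∈ I.subtype (· ≠ u) ↔ a ∈ I := fun a => by
        by_cases hau : a = u
        · simp [hau, hrI, huI]
        · simp [hau]
      obtain ⟨v, hv⟩ := hI
      have hvu : v ≠ u := fun h => huI (h ▸ hv)
      refine (exists_parking_vertex_contractEdge_iff hI' hrI f).1 (hpark _ ⟨⟨v, hvu⟩, ?_⟩ ?_)
      · simpa using hv
      · simpa using hrI
  · set I := univ.filter (fun a => contractTo u ⟨r, hru⟩ a ∈ I')
    have hI : ∀ a, contractTo u ⟨r, hru⟩ a ∈ I' ↔ a ∈ I := by simp [I]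
    have hrI : r ∉ I := by rwa [← hI, contractTo_of_ne _ hru]
    obtain ⟨w, hw⟩ := hI'
    refine (exists_parking_vertex_contractEdge_iff hI hrI f).2 (hpark I ⟨w, ?_⟩ hrI)
    rwa [← hI, contractTo_of_ne _ w.prop]

end Contraction

theorem contraction_bijection_general (n : ℕ) (E : Multiset (Sym2 (Fin (n + 1))))
    (u : Fin (n + 1)) (hu : u ≠ 0)
    (he : s(0, u) ∈ E) :
    Set.BijOn (fun f : Fin (n + 1) → ℤ => fun w : {v : Fin (n + 1) // v ≠ u} => f w.val)
      {f | IsGPF E 0 f ∧ f u = 0}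
      {g | IsGPF
        ((E.erase s(0, u)).map (Sym2.map
          (fun v => if h : v = u then (⟨0, hu.symm⟩ : {v : Fin (n + 1) // v ≠ u}) else ⟨v, h⟩)))
        (⟨0, hu.symm⟩ : {v : Fin (n + 1) // v ≠ u}) g} := by
  refine ⟨fun f ⟨hf, hfu⟩ => (isGPF_contractEdge_iff hu.symm he hfu).2 hf, ?_, ?_⟩
  · rintro f₁ ⟨-, hf₁u⟩ f₂ ⟨-, hf₂u⟩ hf
    funext a
    by_cases hau : a = u
    · rw [hau, hf₁u, hf₂u]
    · exact congrFun hf ⟨a, hau⟩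
  · intro g hg
    set f : Fin (n + 1) → ℤ := fun a => if h : a = u then 0 else g ⟨a, h⟩
    have hfu : f u = 0 := dif_pos rfl
    have hfg : (fun w : {v // v ≠ u} => f w.val) = g := funext fun w => dif_neg w.prop
    exact ⟨f, ⟨(isGPF_contractEdge_iff hu.symm he hfu).1 (hfg ▸ hg), hfu⟩, hfg⟩

/-- contracting an edge `e = {0,u}` (identifying `u` with the root `0`),
restriction away from `u` is a bijection from `G`-parking functions with `f(u) = 0`
to `(G/e)`-parking functions. -/
theorem contraction_bijection (n : ℕ) (E : Multiset (Sym2 (Fin (n + 1))))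
    (hconn : (mAdj E).Connected) (u : Fin (n + 1)) (hu : u ≠ 0)
    (he : s(0, u) ∈ E) :
    Set.BijOn (fun f : Fin (n + 1) → ℤ => fun w : {v : Fin (n + 1) // v ≠ u} => f w.val)
      {f | IsGPF E 0 f ∧ f u = 0}
      {g | IsGPF
        ((E.erase s(0, u)).map (Sym2.map
          (fun v => if h : v = u then (⟨0, hu.symm⟩ : {v : Fin (n + 1) // v ≠ u}) else ⟨v, h⟩)))
        (⟨0, hu.symm⟩ : {v : Fin (n + 1) // v ≠ u}) g} :=
  contraction_bijection_general n E u hu he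
end

section
/- Under the bijection φ from G-parking functions f with f(u) = 0 to (G/e)-parking functions (where e joins the root 0 to u), the statistic w is preserved: w_{G/e}(φ(f)) = w_G(f), where w_H(h) = |E(H)| - |V(H)| - Σ_v h(v). -/
/-! Contracting `e = s(0, u)` deletes exactly one edge, `e` itself (every other edge survives,
possibly as a loop), and exactly one vertex, `u`, so `|E| - |V|` does not change. The values of
`f` on the surviving vertices are untouched, and the one value lost is `f u = 0`. -/

open Finset

lemma Fintype.card_subtype_ne_add_one {V : Type*} [Fintype V] [DecidableEq V] (u : V) :
    Fintype.card {v // v ≠ u} + 1 = Fintype.card V := by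
  rw [← Fintype.card_option, Fintype.card_congr (Equiv.optionSubtypeNe u)]

theorem contraction_preserves_w_general (n : ℕ) (E : Multiset (Sym2 (Fin (n + 1))))
    (u : Fin (n + 1)) (hu : u ≠ 0)
    (he : s(0, u) ∈ E) (f : Fin (n + 1) → ℤ) (hfu : f u = 0) :
    (Multiset.card ((E.erase s(0, u)).map (Sym2.map
        (fun v => if h : v = u then (⟨0, hu.symm⟩ : {v : Fin (n + 1) // v ≠ u}) else ⟨v, h⟩))) : ℤ)
      - Fintype.card {v : Fin (n + 1) // v ≠ u}
      - ∑ w : {v : Fin (n + 1) // v ≠ u}, f w.val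
    = (Multiset.card E : ℤ) - (n + 1) - ∑ v, f v := by
  have edges := Multiset.card_erase_add_one he
  have vertices := Fintype.card_subtype_ne_add_one u
  rw [Fintype.card_fin] at vertices
  rw [Multiset.card_map, Fintype.sum_eq_add_sum_subtype_ne f u, hfu]
  omega

/-- the contraction bijection `φ` preserves the statistic
`w_H(h) = |E(H)| - |V(H)| - ∑ h`. -/
theorem contraction_preserves_w (n : ℕ) (E : Multiset (Sym2 (Fin (n + 1))))
    (hconn : (mAdj E).Connected) (u : Fin (n + 1)) (hu : u ≠ 0)
    (he : s(0, u) ∈ E) (f : Fin (n + 1) → ℤ) (hf : IsGPF E 0 f) (hfu : f u = 0) :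
    (Multiset.card ((E.erase s(0, u)).map (Sym2.map
        (fun v => if h : v = u then (⟨0, hu.symm⟩ : {v : Fin (n + 1) // v ≠ u}) else ⟨v, h⟩))) : ℤ)
      - Fintype.card {v : Fin (n + 1) // v ≠ u}
      - ∑ w : {v : Fin (n + 1) // v ≠ u}, f w.val
    = (Multiset.card E : ℤ) - (n + 1) - ∑ v, f v :=
  contraction_preserves_w_general n E u hu he f hfu
end

section
/- The number of G-parking functions of a connected multigraph G equals the number of spanning trees of G (counted with multiplicity of multiple edges). -/
open Finset

/-!
Both sides satisfy the same deletion–contraction recurrence along an edge `e` joining the root `r`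
to a vertex `v ≠ r`. A `G`-parking function `f` with `f v ≥ 1` becomes a `(G ∖ e)`-parking
function after lowering `f v` by one, while one with `f v = 0` restricts to a `(G / e)`-parking
function rooted at the merged vertex; a spanning tree either avoids `e`, and is a spanning tree of
`G ∖ e`, or contains it, and is then `e` added to a spanning tree of `G / e`. When no such edge
exists both counts are `1` (one vertex) or `0` (isolated root).
-/

theorem Nat.card_subtype_eq_card_and_add_card_and_not {α : Type*} (p q : α → Prop)
    [Finite {x // p x}] :
    Nat.card {x // p x} = Nat.card {x // p x ∧ q x} + Nat.card {x // p x ∧ ¬q x} := by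
  classical
  rw [← Nat.card_congr (Equiv.subtypeSubtypeEquivSubtypeInter p q),
    ← Nat.card_congr (Equiv.subtypeSubtypeEquivSubtypeInter p fun x => ¬q x), ← Nat.card_sum]
  exact Nat.card_congr (Equiv.sumCompl _).symm

section Connectivity

theorem SimpleGraph.Connected.of_reachable_map {V W : Type*} {G : SimpleGraph V}
    {G' : SimpleGraph W} (hG : G.Connected) (φ : V → W)
    (hadj : ∀ x y, G.Adj x y → G'.Reachable (φ x) (φ y))
    (hcover : ∀ w, ∃ x, G'.Reachable (φ x) w) : G'.Connected := by
  have hreach : ∀ x y, G.Reachable x y → G'.Reachable (φ x) (φ y) := fun x y h => by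
    rw [SimpleGraph.reachable_iff_reflTransGen] at h ⊢
    exact Relation.ReflTransGen.lift' φ
      (fun a b hab => (SimpleGraph.reachable_iff_reflTransGen _ _).1 (hadj a b hab)) x y h
  obtain ⟨x⟩ := hG.nonempty
  refine (SimpleGraph.connected_iff _).2 ⟨fun a b => ?_, ⟨φ x⟩⟩
  obtain ⟨x, hx⟩ := hcover a
  obtain ⟨y, hy⟩ := hcover b
  exact hx.symm.trans ((hreach x y (hG x y)).trans hy)

variable {V : Type} [DecidableEq V] {E : Multiset (Sym2 V)}

theorem mAdj_adj_iff {x y : V} : (mAdj E).Adj x y ↔ x ≠ y ∧ s(x, y) ∈ E := by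
  rw [mAdj, SimpleGraph.fromRel_adj, Sym2.eq_swap, or_self]

theorem mAdj_reachable_of_mem {x y : V} (h : s(x, y) ∈ E) : (mAdj E).Reachable x y := by
  by_cases hxy : x = y
  · exact hxy ▸ SimpleGraph.Reachable.refl _
  · exact (mAdj_adj_iff.2 ⟨hxy, h⟩).reachable

end Connectivity

section Collapse

variable {V : Type} [DecidableEq V] {v r : V}

/-- The vertex map `V → V ∖ {v}` of the contraction of the edge `s(r, v)`. -/
def collapse (hv : v ≠ r) (x : V) : {x : V // x ≠ v} :=
  if h : x = v then ⟨r, hv.symm⟩ else ⟨x, h⟩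

theorem collapse_self (hv : v ≠ r) : collapse hv v = ⟨r, hv.symm⟩ := dif_pos rfl

theorem collapse_of_ne (hv : v ≠ r) {x : V} (hx : x ≠ v) : collapse hv x = ⟨x, hx⟩ := dif_neg hx

theorem collapse_val (hv : v ≠ r) (x : {x : V // x ≠ v}) : collapse hv x.val = x :=
  collapse_of_ne hv x.2

theorem collapse_eq_iff (hv : v ≠ r) {x : V} {u : {x : V // x ≠ v}} (hu : u ≠ ⟨r, hv.symm⟩) :
    collapse hv x = u ↔ x = u.val := by
  by_cases hx : x = v
  · subst hx
    rw [collapse_self]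
    exact ⟨fun h => (hu h.symm).elim, fun h => (u.2 h.symm).elim⟩
  · rw [collapse_of_ne hv hx, Subtype.ext_iff]

theorem collapse_mem_iff (hv : v ≠ r) {x : V} {I : Finset {x : V // x ≠ v}}
    (hr : ⟨r, hv.symm⟩ ∉ I) :
    collapse hv x ∈ I ↔ x ∈ I.map (Function.Embedding.subtype _) := by
  by_cases hx : x = v
  · subst hx
    simp [collapse_self, hr]
  · simp [collapse_of_ne hv hx, hx]

theorem mAdj_cons_reachable_collapse (hv : v ≠ r) (M : Multiset (Sym2 V)) (x : V) :
    (mAdj (s(r, v) ::ₘ M)).Reachable (collapse hv x).val x := by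
  by_cases hx : x = v
  · subst hx
    rw [collapse_self]
    exact mAdj_reachable_of_mem (Multiset.mem_cons_self _ _)
  · rw [collapse_of_ne hv hx]

theorem mAdj_cons_connected_iff (hv : v ≠ r) (M : Multiset (Sym2 V)) :
    (mAdj (s(r, v) ::ₘ M)).Connected ↔ (mAdj (M.map (Sym2.map (collapse hv)))).Connected := by
  have hreach := mAdj_cons_reachable_collapse hv M
  constructor
  · refine fun h => h.of_reachable_map (collapse hv) (fun x y hxy => ?_)
      (fun w => ⟨w.val, by rw [collapse_val]⟩)
    rcases Multiset.mem_cons.1 (mAdj_adj_iff.1 hxy).2 with hrv | hM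
    · rcases Sym2.eq_iff.1 hrv with ⟨rfl, rfl⟩ | ⟨rfl, rfl⟩ <;>
        rw [collapse_self, collapse_of_ne hv hv.symm]
    · exact mAdj_reachable_of_mem (Multiset.mem_map_of_mem (Sym2.map (collapse hv)) hM)
  · refine fun h => h.of_reachable_map Subtype.val (fun x y hxy => ?_)
      (fun w => ⟨collapse hv w, hreach w⟩)
    have hedge : ∀ p q, s(p, q) ∈ M →
        (mAdj (s(r, v) ::ₘ M)).Reachable (collapse hv p).val (collapse hv q).val :=
      fun p q hpq => (hreach p).trans
        ((mAdj_reachable_of_mem (Multiset.mem_cons_of_mem hpq)).trans (hreach q).symm)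
    obtain ⟨a, ha, hax⟩ := Multiset.mem_map.1 (mAdj_adj_iff.1 hxy).2
    induction a using Sym2.ind with
    | _ p q =>
      rcases Sym2.eq_iff.1 ((Sym2.map_mk _ _ _).symm.trans hax) with ⟨rfl, rfl⟩ | ⟨rfl, rfl⟩
      · exact hedge p q ha
      · exact (hedge p q ha).symm

end Collapse

section ParkingFunctions

theorem exists_notMem_and_mk_eq_iff {V : Type} {I : Finset V} {x y u : V} :
    (∃ w, w ∉ I ∧ s(x, y) = s(u, w)) ↔ x = u ∧ y ∉ I ∨ y = u ∧ x ∉ I := by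
  simp only [Sym2.eq_iff]
  grind

variable {V : Type} [Fintype V] [DecidableEq V] {E M : Multiset (Sym2 V)} {r v u : V}
  {I : Finset V} {f : V → ℤ}

theorem outdeg_cons (a : Sym2 V) (M : Multiset (Sym2 V)) (I : Finset V) (u : V) :
    outdeg (a ::ₘ M) I u = outdeg M I u + if ∃ w, w ∉ I ∧ a = s(u, w) then 1 else 0 := by
  unfold outdeg
  rw [Multiset.filter_cons, Multiset.card_add]
  split_ifs <;> simp [add_comm]

theorem outdeg_cons_of_mem_of_notMem (hu : u ∈ I) (hr : r ∉ I) :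
    outdeg (s(r, v) ::ₘ M) I u = outdeg M I u + if u = v then 1 else 0 := by
  have hiff : r = u ∧ v ∉ I ∨ v = u ∧ r ∉ I ↔ u = v := by grind
  simp only [outdeg_cons, exists_notMem_and_mk_eq_iff, hiff]

theorem IsGPF.bounds (hf : IsGPF E r f) (hv : v ≠ r) : 0 ≤ f v ∧ f v < outdeg E {v} v := by
  obtain ⟨u, hu, hfu⟩ := hf.2 {v} (singleton_nonempty v) (by simpa using hv.symm)
  rwa [mem_singleton.1 hu] at hfu

theorem finite_isGPF (E : Multiset (Sym2 V)) (r : V) : Finite {f : V → ℤ // IsGPF E r f} := by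
  have hbound : {f | IsGPF E r f} ⊆ Set.univ.pi fun _ => Set.Icc (-1) (Multiset.card E : ℤ) := by
    intro f hf v _
    have hdeg : outdeg E {v} v ≤ Multiset.card E := Multiset.card_le_card (Multiset.filter_le _ _)
    by_cases hv : v = r
    · subst hv
      simp only [Set.mem_Icc, hf.1]
      omega
    · have := hf.bounds hv
      constructor <;> omega
  exact ((Set.Finite.pi fun _ => Set.finite_Icc _ _).subset hbound).to_subtype

theorem isGPF_iff_of_forall_mem {E' : Multiset (Sym2 V)} {g : V → ℤ} (hr : f r = g r)
    (h : ∀ I : Finset V, r ∉ I → ∀ u ∈ I,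
      (0 ≤ f u ∧ f u < outdeg E I u ↔ 0 ≤ g u ∧ g u < outdeg E' I u)) :
    IsGPF E r f ↔ IsGPF E' r g := by
  unfold IsGPF
  rw [hr]
  refine and_congr_right fun _ => forall_congr' fun I => forall_congr' fun _ =>
    forall_congr' fun hrI => exists_congr fun u => ?_
  exact and_congr_right (h I hrI u)

theorem isGPF_cons_iff_sub_single (hv : v ≠ r) (hfv : 1 ≤ f v) :
    IsGPF (s(r, v) ::ₘ M) r f ↔ IsGPF M r (f - Pi.single v 1) := by
  refine isGPF_iff_of_forall_mem (by simp [hv.symm]) fun I hrI u hu => ?_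
  rw [outdeg_cons_of_mem_of_notMem hu hrI, Pi.sub_apply, Pi.single_apply]
  split_ifs with huv
  · subst huv
    push_cast
    omega
  · simp

theorem outdeg_map_collapse (hv : v ≠ r) {I : Finset {x : V // x ≠ v}} {u : {x : V // x ≠ v}}
    (hu : u ∈ I) (hr : ⟨r, hv.symm⟩ ∉ I) :
    outdeg (M.map (Sym2.map (collapse hv))) I u
      = outdeg M (I.map (Function.Embedding.subtype _)) u := by
  have hur : u ≠ ⟨r, hv.symm⟩ := fun h => hr (h ▸ hu)
  unfold outdeg
  rw [Multiset.filter_map, Multiset.card_map]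
  congr 1
  refine Multiset.filter_congr fun a _ => ?_
  induction a using Sym2.ind with
  | _ x y =>
    simp only [Function.comp_apply, Sym2.map_mk, exists_notMem_and_mk_eq_iff,
      collapse_eq_iff hv hur, collapse_mem_iff hv hr]

theorem isGPF_cons_iff_collapse (hv : v ≠ r) (hfv : f v = 0) :
    IsGPF (s(r, v) ::ₘ M) r f
      ↔ IsGPF (M.map (Sym2.map (collapse hv))) ⟨r, hv.symm⟩ (fun x => f x) := by
  refine and_congr_right fun _ => ⟨fun hf I hI hrI => ?_, fun hf I hI hrI => ?_⟩
  · have hrI' : r ∉ I.map (Function.Embedding.subtype _) := by simpa using fun _ => hrI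
    obtain ⟨_, hw, hpos, hlt⟩ := hf _ hI.map hrI'
    obtain ⟨u, hu, rfl⟩ := mem_map.1 hw
    simp only [Function.Embedding.subtype_apply] at hw hpos hlt
    rw [outdeg_cons_of_mem_of_notMem hw hrI', if_neg u.2, add_zero] at hlt
    exact ⟨u, hu, hpos, by rwa [outdeg_map_collapse hv hu hrI]⟩
  · by_cases hvI : v ∈ I
    · refine ⟨v, hvI, hfv.ge, ?_⟩
      rw [hfv, outdeg_cons_of_mem_of_notMem hvI hrI, if_pos rfl]
      positivity
    · have hIv : (I.subtype (· ≠ v)).map (Function.Embedding.subtype _) = I := by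
        rw [subtype_map, filter_true_of_mem fun x hx => ne_of_mem_of_not_mem hx hvI]
      obtain ⟨x, hx⟩ := hI
      have hrI' : ⟨r, hv.symm⟩ ∉ I.subtype (· ≠ v) := by simpa using hrI
      obtain ⟨u, hu, hpos, hlt⟩ := hf (I.subtype (· ≠ v))
        ⟨⟨x, ne_of_mem_of_not_mem hx hvI⟩, by simpa using hx⟩ hrI'
      rw [outdeg_map_collapse hv hu hrI', hIv] at hlt
      refine ⟨u, by simpa using hu, hpos, hlt.trans_le ?_⟩
      exact_mod_cast Multiset.card_le_card (Multiset.filter_le_filter _ (Multiset.le_cons_self _ _))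

theorem card_isGPF_cons_and_pos (hv : v ≠ r) (M : Multiset (Sym2 V)) :
    Nat.card {f : V → ℤ // IsGPF (s(r, v) ::ₘ M) r f ∧ 1 ≤ f v}
      = Nat.card {f : V → ℤ // IsGPF M r f} := by
  refine Nat.card_congr (Equiv.subtypeEquiv (Equiv.subRight (Pi.single v 1)) fun f => ?_)
  refine ⟨fun ⟨hf, hfv⟩ => (isGPF_cons_iff_sub_single hv hfv).1 hf, fun hg => ?_⟩
  have hfv : 1 ≤ f v := by simpa using (hg.bounds hv).1
  exact ⟨(isGPF_cons_iff_sub_single hv hfv).2 hg, hfv⟩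

theorem card_isGPF_cons_and_eq_zero (hv : v ≠ r) (M : Multiset (Sym2 V)) :
    Nat.card {f : V → ℤ // IsGPF (s(r, v) ::ₘ M) r f ∧ f v = 0}
      = Nat.card {g : {x : V // x ≠ v} → ℤ //
          IsGPF (M.map (Sym2.map (collapse hv))) ⟨r, hv.symm⟩ g} :=
  Nat.card_congr
    { toFun := fun f => ⟨fun x => f.1 x, (isGPF_cons_iff_collapse hv f.2.2).1 f.2.1⟩
      invFun := fun g => ⟨fun x => if h : x = v then 0 else g.1 ⟨x, h⟩,
        (isGPF_cons_iff_collapse hv (dif_pos rfl)).2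
          (by convert g.2 using 1; ext x; simp [x.2]), dif_pos rfl⟩
      left_inv := fun f => by
        ext x
        by_cases hx : x = v
        · simp [hx, f.2.2]
        · simp [hx]
      right_inv := fun g => by
        ext x
        simp [x.2] }

theorem card_isGPF_cons (hv : v ≠ r) (M : Multiset (Sym2 V)) :
    Nat.card {f : V → ℤ // IsGPF (s(r, v) ::ₘ M) r f}
      = Nat.card {f : V → ℤ // IsGPF M r f}
        + Nat.card {g : {x : V // x ≠ v} → ℤ //
            IsGPF (M.map (Sym2.map (collapse hv))) ⟨r, hv.symm⟩ g} := by
  have := finite_isGPF (s(r, v) ::ₘ M) r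
  rw [Nat.card_subtype_eq_card_and_add_card_and_not _ fun f => f v = 0, add_comm,
    ← card_isGPF_cons_and_pos hv, ← card_isGPF_cons_and_eq_zero hv]
  congr 1
  refine Nat.card_congr (Equiv.subtypeEquivRight fun f => and_congr_right fun hf => ?_)
  have := (hf.bounds hv).1
  omega

theorem card_isGPF_of_subsingleton [Subsingleton V] (E : Multiset (Sym2 V)) (r : V) :
    Nat.card {f : V → ℤ // IsGPF E r f} = 1 := by
  refine Nat.card_eq_one_iff_unique.2 ⟨⟨fun f g => ?_⟩, ⟨⟨fun _ => -1, rfl, ?_⟩⟩⟩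
  · ext x
    rw [Subsingleton.elim x r, f.2.1, g.2.1]
  · rintro I ⟨x, hx⟩ hr
    exact (hr (Subsingleton.elim x r ▸ hx)).elim

theorem card_isGPF_eq_zero [Nontrivial V] (hr : ∀ w ≠ r, s(r, w) ∉ E) :
    Nat.card {f : V → ℤ // IsGPF E r f} = 0 := by
  refine Nat.card_eq_zero.2 (Or.inl ⟨fun ⟨f, hf⟩ => ?_⟩)
  obtain ⟨w, hw⟩ := exists_ne r
  obtain ⟨u, hu, hpos, hlt⟩ := hf.2 {r}ᶜ ⟨w, by simpa using hw⟩ (by simp)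
  have hdeg : outdeg E {r}ᶜ u = 0 := by
    refine Multiset.card_eq_zero.2 (Multiset.filter_eq_nil.2 fun a ha => ?_)
    rintro ⟨w, hw, rfl⟩
    rw [mem_compl, not_not, mem_singleton] at hw
    subst hw
    exact hr u (by simpa using hu) (Sym2.eq_swap ▸ ha)
  omega

end ParkingFunctions

section SpanningTrees

variable {V ε : Type} [Fintype V] [DecidableEq V]

-- Edges are drawn from `S ⊆ ε`, so that deleting an edge does not change the edge type.
open Classical in
noncomputable def spanningTrees (ends : ε → Sym2 V) (S : Finset ε) : Finset (Finset ε) :=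
  {s ∈ S.powerset | s.card = Fintype.card V - 1 ∧ (mAdj (s.val.map ends)).Connected}

theorem card_spanningTrees_insert [DecidableEq ε] {ends : ε → Sym2 V} {S : Finset ε} {e : ε}
    {r v : V} (hv : v ≠ r) (he : ends e = s(r, v)) (heS : e ∉ S) :
    #(spanningTrees ends (insert e S))
      = #(spanningTrees ends S) + #(spanningTrees (Sym2.map (collapse hv) ∘ ends) S) := by
  classical
  simp only [spanningTrees, card_filter]
  rw [sum_powerset_insert heS]
  congr 1
  refine sum_congr rfl fun s hs => if_congr ?_ rfl rfl
  have hes : e ∉ s := notMem_mono (mem_powerset.1 hs) heS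
  have hV : 1 < Fintype.card V := Fintype.one_lt_card_iff.2 ⟨v, r, hv⟩
  have hV' : Fintype.card {x // x ≠ v} = Fintype.card V - 1 := by simp
  rw [card_insert_of_notMem hes, insert_val_of_notMem hes, Multiset.map_cons, he,
    mAdj_cons_connected_iff hv, Multiset.map_map, hV']
  exact and_congr_left' (by omega)

theorem card_spanningTrees_of_subsingleton [Subsingleton V] [Nonempty V] (ends : ε → Sym2 V)
    (S : Finset ε) : #(spanningTrees ends S) = 1 := by
  have hconn (G : SimpleGraph V) : G.Connected :=
    (SimpleGraph.connected_iff G).2 ⟨fun a b => Subsingleton.elim a b ▸ .refl _, ‹_›⟩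
  rw [card_eq_one]
  refine ⟨∅, ?_⟩
  ext s
  simp only [spanningTrees, mem_filter, mem_powerset, hconn, mem_singleton, and_true,
    Fintype.card_le_one_iff_subsingleton.2 ‹_›, Nat.sub_eq_zero_of_le, card_eq_zero]
  exact ⟨And.right, fun hs => ⟨hs ▸ empty_subset S, hs⟩⟩

theorem spanningTrees_eq_empty [Nontrivial V] {ends : ε → Sym2 V} {S : Finset ε} {r : V}
    (hr : ∀ w ≠ r, s(r, w) ∉ S.val.map ends) : spanningTrees ends S = ∅ := by
  classical
  refine filter_false_of_mem fun s hs ⟨_, hconn⟩ => ?_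
  obtain ⟨w, hw⟩ := hconn.preconnected.exists_adj_of_nontrivial r
  obtain ⟨hrw, hmem⟩ := mAdj_adj_iff.1 hw
  exact hr w hrw.symm
    (Multiset.mem_of_le (Multiset.map_le_map (val_le_iff.2 (mem_powerset.1 hs))) hmem)

end SpanningTrees

theorem card_isGPF_eq_card_spanningTrees {ε : Type} (S : Finset ε) {V : Type} [Fintype V]
    [DecidableEq V] (ends : ε → Sym2 V) (r : V) :
    Nat.card {f : V → ℤ // IsGPF (S.val.map ends) r f} = #(spanningTrees ends S) := by
  classical
  induction S using Finset.strongInduction generalizing V with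
  | H S ih =>
    by_cases hr : ∃ v ≠ r, s(r, v) ∈ S.val.map ends
    · obtain ⟨v, hv, hmem⟩ := hr
      obtain ⟨e, he, hev⟩ := Multiset.mem_map.1 hmem
      have hS := insert_erase he
      have heS := notMem_erase e S
      rw [← hS, insert_val_of_notMem heS, Multiset.map_cons, hev, card_isGPF_cons hv,
        card_spanningTrees_insert hv hev heS, Multiset.map_map, ih _ (erase_ssubset he),
        ih _ (erase_ssubset he)]
    · push Not at hr
      have : Nonempty V := ⟨r⟩
      rcases subsingleton_or_nontrivial V with _ | _
      · rw [card_isGPF_of_subsingleton, card_spanningTrees_of_subsingleton]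
      · rw [card_isGPF_eq_zero hr, spanningTrees_eq_empty hr, card_empty]

theorem card_gpf_eq_card_spanning_trees_general (n : ℕ) (ε : Type) [Fintype ε]
    (ends : ε → Sym2 (Fin (n + 1))) :
    Nat.card {f : Fin (n + 1) → ℤ // IsGPF (Finset.univ.val.map ends) 0 f}
      = Nat.card {s : Finset ε // s.card = n ∧ (mAdj (s.val.map ends)).Connected} := by
  classical
  rw [card_isGPF_eq_card_spanningTrees, Nat.card_eq_fintype_card, Fintype.card_subtype,
    spanningTrees, powerset_univ, Fintype.card_fin, Nat.add_sub_cancel]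

/-- the number of `G`-parking functions of a connected multigraph `G`
(with edges indexed by `ε`, so parallel edges count with multiplicity) equals the
number of spanning trees of `G`. -/
theorem card_gpf_eq_card_spanning_trees (n : ℕ) (ε : Type) [Fintype ε]
    (ends : ε → Sym2 (Fin (n + 1)))
    (hconn : (mAdj (Finset.univ.val.map ends)).Connected) :
    Nat.card {f : Fin (n + 1) → ℤ // IsGPF (Finset.univ.val.map ends) 0 f}
      = Nat.card {s : Finset ε // s.card = n ∧ (mAdj (s.val.map ends)).Connected} :=
  card_gpf_eq_card_spanning_trees_general n ε ends
end

section
/- For the complete graph K_{n+1} on vertices {0,1,...,n}, a function f with f(0) = -1 is a K_{n+1}-parking function if and only if (f(1),...,f(n)) is a classical parking function of length n. -/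
open Finset

/-! On `K_{n+1}` every vertex of `I` has outdegree `n + 1 - |I|`, so the `G`-parking condition
says that every nonempty `I ⊆ {1, …, n}` contains some `v` with `0 ≤ f v` and `f v + |I| ≤ n`.
For a sequence `a` of naturals this subset condition is equivalent to being a parking function:
if `b = a ∘ σ` is sorted with `b i ≤ i`, the element of `I` that comes first in the sorted order
sits at a position `i ≤ n - |I|`; conversely, applying the condition to the entries at positions
`≥ i` of the sorted sequence gives `b i ≤ i`. -/

lemma outdeg_top_of_mem {V : Type} [Fintype V] [DecidableEq V] {I : Finset V} {v : V}
    (hv : v ∈ I) :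
    outdeg (⊤ : SimpleGraph V).edgeFinset.val I v = Fintype.card V - #I := by
  have hedges : (⊤ : SimpleGraph V).edgeFinset.filter (fun e => ∃ w, w ∉ I ∧ e = s(v, w)) =
      Iᶜ.image (fun w => s(v, w)) := by
    ext e
    simp only [mem_filter, mem_image, mem_compl, SimpleGraph.mem_edgeFinset]
    refine ⟨fun ⟨_, w, hw, he⟩ => ⟨w, hw, he.symm⟩, ?_⟩
    rintro ⟨w, hw, rfl⟩
    exact ⟨(SimpleGraph.top_adj v w).mpr (ne_of_mem_of_not_mem hv hw), w, hw, rfl⟩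
  rw [outdeg, ← filter_val, card_val, hedges,
    card_image_of_injective _ fun _ _ => Sym2.congr_right.mp, card_compl]

lemma isGPF_top_iff {V : Type} [Fintype V] [DecidableEq V] (r : V) (f : V → ℤ) :
    IsGPF (⊤ : SimpleGraph V).edgeFinset.val r f ↔ f r = -1 ∧
      ∀ I : Finset V, I.Nonempty → r ∉ I → ∃ v ∈ I, 0 ≤ f v ∧ f v + #I < Fintype.card V := by
  refine and_congr_right fun _ => forall₃_congr fun I _ _ =>
    exists_congr fun v => and_congr_right fun hv => ?_
  rw [outdeg_top_of_mem hv, Nat.cast_sub (card_le_univ I)]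
  constructor <;> rintro ⟨h0, h⟩ <;> exact ⟨h0, by omega⟩

lemma IsPF.exists_add_card_le {n : ℕ} {a : Fin n → ℕ} (ha : IsPF n a) {J : Finset (Fin n)}
    (hJ : J.Nonempty) : ∃ j ∈ J, a j + #J ≤ n := by
  obtain ⟨σ, -, hle⟩ := ha
  obtain ⟨j, hj, hmin⟩ := J.exists_min_image σ.symm hJ
  have hcard : #J ≤ n - σ.symm j := by
    rw [← Fin.card_Ici]
    exact card_le_card_of_injOn σ.symm (fun x hx => mem_Ici.mpr (hmin x hx))
      σ.symm.injective.injOn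
  have hai : a j ≤ σ.symm j := by simpa using hle (σ.symm j)
  exact ⟨j, hj, by omega⟩

lemma isPF_of_forall_exists_add_card_le {n : ℕ} {a : Fin n → ℕ}
    (h : ∀ J : Finset (Fin n), J.Nonempty → ∃ j ∈ J, a j + #J ≤ n) : IsPF n a := by
  refine ⟨Tuple.sort a, Tuple.monotone_sort a, fun i => ?_⟩
  obtain ⟨j, hj, hle⟩ := h ((Ici i).map (Tuple.sort a).toEmbedding)
    ⟨_, mem_map_of_mem _ (mem_Ici.mpr le_rfl)⟩
  obtain ⟨k, hk, rfl⟩ := mem_map.mp hj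
  rw [card_map, Fin.card_Ici] at hle
  have hmono := Tuple.monotone_sort a (mem_Ici.mp hk)
  simp only [Function.comp_apply, Equiv.toEmbedding_apply] at hmono hle ⊢
  omega

lemma isPF_iff_forall_exists_add_card_le {n : ℕ} {a : Fin n → ℕ} :
    IsPF n a ↔ ∀ J : Finset (Fin n), J.Nonempty → ∃ j ∈ J, a j + #J ≤ n :=
  ⟨fun ha _ => ha.exists_add_card_le, isPF_of_forall_exists_add_card_le⟩

lemma Fin.forall_finset_zero_notMem_iff {n : ℕ} {P : Finset (Fin (n + 1)) → Prop} :
    (∀ I : Finset (Fin (n + 1)), 0 ∉ I → P I) ↔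
      ∀ J : Finset (Fin n), P (J.map (Fin.succEmb n)) := by
  refine ⟨fun h J => h _ (by simp [Fin.succ_ne_zero]), fun h I hI => ?_⟩
  have hsub : I ⊆ univ.map (Fin.succEmb n) := by
    rw [← Fin.Ioi_zero_eq_map]
    exact fun x hx => mem_Ioi.mpr (Fin.pos_of_ne_zero (ne_of_mem_of_not_mem hx hI))
  obtain ⟨J, -, rfl⟩ := subset_map_iff.mp hsub
  exact h J

lemma forall_exists_nonneg_add_card_le_iff {ι : Type*} (g : ι → ℤ) (N : ℕ) :
    (∀ J : Finset ι, J.Nonempty → ∃ j ∈ J, 0 ≤ g j ∧ g j + #J ≤ N) ↔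
      (∀ i, 0 ≤ g i) ∧ ∀ J : Finset ι, J.Nonempty → ∃ j ∈ J, (g j).toNat + #J ≤ N := by
  constructor
  · intro h
    have hnn : ∀ i, 0 ≤ g i := fun i => by
      obtain ⟨j, hj, h0, -⟩ := h {i} (singleton_nonempty i)
      rwa [mem_singleton.mp hj] at h0
    refine ⟨hnn, fun J hJ => ?_⟩
    obtain ⟨j, hj, h0, hle⟩ := h J hJ
    exact ⟨j, hj, by omega⟩
  · rintro ⟨hnn, h⟩ J hJ
    obtain ⟨j, hj, hle⟩ := h J hJ
    have h0 := hnn j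
    exact ⟨j, hj, h0, by omega⟩

/-- for the complete graph `K_{n+1}` with root `0`, a function with
`f 0 = -1` is a `K_{n+1}`-parking function iff `(f(1),...,f(n))` is a classical
parking function of length `n`. -/
theorem gpf_complete_iff_classical (n : ℕ) (f : Fin (n + 1) → ℤ) (hf0 : f 0 = -1) :
    IsGPF ((⊤ : SimpleGraph (Fin (n + 1))).edgeFinset.val) 0 f ↔
      ((∀ i : Fin n, 0 ≤ f i.succ) ∧ IsPF n (fun i => (f i.succ).toNat)) := by
  rw [isGPF_top_iff, isPF_iff_forall_exists_add_card_le]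
  refine Iff.trans ?_ (forall_exists_nonneg_add_card_le_iff (fun i : Fin n => f i.succ) n)
  rw [forall_congr' fun _ => forall_comm, Fin.forall_finset_zero_notMem_iff]
  simp only [hf0, true_and, Fintype.card_fin, map_nonempty, card_map, mem_map,
    exists_exists_and_eq_and, Fin.coe_succEmb, Nat.cast_add_one, Int.lt_add_one_iff]
end

section
/- Let α = (a_1,...,a_n) be a classical parking function and suppose a_i = j is an α-critical maximum. Then exactly j of the terms of α are strictly less than j. -/
open Finset

/-- If the sorted rearrangement `b = a ∘ σ` had fewer than `v` terms below `v`, say `m` of them, then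
`b_m ≥ v > m`, violating `b_m ≤ m`. -/
theorem IsPF.le_card_filter_lt {n : ℕ} {a : Fin n → ℕ} (h : IsPF n a) {v : ℕ} (hv : v ≤ n) :
    v ≤ #{k | a k < v} := by
  obtain ⟨σ, hmono, hbound⟩ := h
  by_contra! hlt
  let M : Fin n := ⟨#{k | a k < v}, hlt.trans_le hv⟩
  have hsub : (Iic M).map σ.toEmbedding ⊆ ({k | a k < v} : Finset (Fin n)) := by
    intro k hk
    obtain ⟨l, hl, rfl⟩ := mem_map.mp hk
    have : a (σ l) ≤ a (σ M) := hmono (mem_Iic.mp hl)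
    simpa using this.trans_lt ((hbound M).trans_lt hlt)
  simpa [M, Fin.card_Iic] using card_le_card hsub

theorem IsPF.lt {n : ℕ} {a : Fin n → ℕ} (h : IsPF n a) (i : Fin n) : a i < n := by
  obtain ⟨σ, -, hbound⟩ := h
  simpa using (hbound (σ.symm i)).trans_lt (σ.symm i).isLt

theorem card_filter_lt_le_of_card_filter_gt {n : ℕ} (a : Fin n → ℕ) (i : Fin n)
    (h : #{k | a i < a k} = n - 1 - a i) : #{k | a k < a i} ≤ a i := by
  have hmiss : #(({k | a k < a i} : Finset (Fin n)) ∪ ({k | a i < a k} : Finset (Fin n))) < n := by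
    refine (card_lt_card ⟨subset_univ _, fun hall => ?_⟩).trans_eq (card_fin n)
    simpa using hall (mem_univ i)
  rw [card_union_of_disjoint (disjoint_filter.mpr fun _ _ _ => by omega)] at hmiss
  omega

/-- if `a_i = j` is an `α`-critical maximum of a classical parking
function `α`, then exactly `j` terms of `α` are strictly less than `j`. -/
theorem crit_max_count_below (n : ℕ) (a : Fin n → ℕ) (hpf : IsPF n a) (i : Fin n)
    (hcrit : IsCritMax n a i) :
    (Finset.univ.filter (fun k => a k < a i)).card = a i :=
  le_antisymm (card_filter_lt_le_of_card_filter_gt a i hcrit.1)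
    (hpf.le_card_filter_lt (hpf.lt i).le)
end

section
/- Let G be a connected multigraph on {0,...,n} and let u be a vertex adjacent to 0 with μ_G(0,u) ≥ 2 (at least two parallel edges between 0 and u). If e is one of these parallel edges, then the map f ↦ f restricted appropriately gives a partition: the G-parking functions split into those with f(u) = 0 (in bijection with (G/e)-parking functions) and those with f(u) ≥ 1 (in bijection with (G-e)-parking functions), proving |P_G| = |P_{G/e}| + |P_{G-e}|. -/
open Finset

/-!
Split the `G`-parking functions according to whether `f u = 0`.

If `f u = 0`, every set `I ∌ r` containing `u` is witnessed by `u` itself, because the edge `e`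
leaves `I` at `u`; so only the sets avoiding `u` matter, and these are exactly the sets of `G/e`
avoiding the merged root, with the same out-degrees.

If `f u ≥ 1`, lower `f u` by one: deleting `e` lowers the out-degree of `u` by exactly one for every
`I ∌ r` and changes no other out-degree, so this is a bijection onto the `(G - e)`-parking functions.
-/

theorem Nat.card_eq_card_and_add_card_and_not {α : Type*} (p q : α → Prop)
    [Finite {x // p x}] :
    Nat.card {x // p x} = Nat.card {x // p x ∧ q x} + Nat.card {x // p x ∧ ¬ q x} := by
  classical
  rw [← Nat.card_congr (Equiv.subtypeSubtypeEquivSubtypeInter p q),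
    ← Nat.card_congr (Equiv.subtypeSubtypeEquivSubtypeInter p (¬ q ·)), ← Nat.card_sum]
  exact Nat.card_congr (Equiv.sumCompl fun x : {x // p x} => q x).symm

section Outdeg

variable {V : Type} [Fintype V] [DecidableEq V]

theorem outdeg_le_card (E : Multiset (Sym2 V)) (I : Finset V) (v : V) :
    outdeg E I v ≤ Multiset.card E :=
  Multiset.card_le_card (Multiset.filter_le _ E)

theorem outdeg_erase_of_notMem {E : Multiset (Sym2 V)} {e : Sym2 V} (he : e ∈ E)
    {I : Finset V} {v : V} (hv : v ∉ e) :
    outdeg (E.erase e) I v = outdeg E I v := by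
  conv_rhs => rw [← Multiset.cons_erase he]
  unfold outdeg
  rw [Multiset.filter_cons_of_neg]
  rintro ⟨w, -, rfl⟩
  exact hv (Sym2.mem_mk_left v w)

theorem outdeg_eq_outdeg_erase_add_one {E : Multiset (Sym2 V)} {v w : V} (he : s(w, v) ∈ E)
    {I : Finset V} (hw : w ∉ I) :
    outdeg E I v = outdeg (E.erase s(w, v)) I v + 1 := by
  conv_lhs => rw [← Multiset.cons_erase he]
  unfold outdeg
  rw [Multiset.filter_cons_of_pos _ ⟨w, hw, Sym2.eq_swap⟩, Multiset.card_cons]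

theorem outdeg_map_sym2Map {W : Type} [Fintype W] [DecidableEq W] (π : V → W)
    (D : Multiset (Sym2 V)) (I : Finset W) {v : V} (hv : ∀ x, π x = π v → x = v) :
    outdeg (D.map (Sym2.map π)) I (π v) = outdeg D (univ.filter fun x => π x ∈ I) v := by
  unfold outdeg
  rw [Multiset.filter_map, Multiset.card_map]
  congr 1
  refine Multiset.filter_congr fun e _ => ?_
  induction e using Sym2.ind with
  | _ a b =>
    simp only [Function.comp_apply, Sym2.map_mk, Sym2.eq_iff, mem_filter, mem_univ,
      true_and]
    constructor
    · rintro ⟨w, hw, ⟨ha, rfl⟩ | ⟨rfl, hb⟩⟩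
      · exact ⟨b, hw, .inl ⟨hv a ha, rfl⟩⟩
      · exact ⟨a, hw, .inr ⟨rfl, hv b hb⟩⟩
    · rintro ⟨w, hw, ⟨rfl, rfl⟩ | ⟨rfl, rfl⟩⟩
      · exact ⟨_, hw, .inl ⟨rfl, rfl⟩⟩
      · exact ⟨_, hw, .inr ⟨rfl, rfl⟩⟩

end Outdeg

section ParkingFunctions

variable {V : Type} [Fintype V] [DecidableEq V] {E : Multiset (Sym2 V)} {r : V}

theorem IsGPF.mem_Ico_outdeg_singleton {f : V → ℤ} (hf : IsGPF E r f) {v : V} (hv : v ≠ r) :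
    f v ∈ Set.Ico 0 (outdeg E {v} v : ℤ) := by
  obtain ⟨w, hw, hbounds⟩ := hf.2 {v} (singleton_nonempty v) (by simpa using hv.symm)
  rwa [mem_singleton.mp hw] at hbounds

instance finite_isGPF_s17 (E : Multiset (Sym2 V)) (r : V) : Finite {f : V → ℤ // IsGPF E r f} := by
  refine Set.Finite.to_subtype
    ((Set.Finite.pi' fun _ => Set.finite_Icc (-1 : ℤ) (Multiset.card E)).subset ?_)
  intro f (hf : IsGPF E r f) v
  by_cases hv : v = r
  · subst hv
    simp [hf.1]
  · have hbounds := hf.mem_Ico_outdeg_singleton hv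
    have hle : (outdeg E {v} v : ℤ) ≤ Multiset.card E := by exact_mod_cast outdeg_le_card E {v} v
    exact ⟨by linarith [hbounds.1], hbounds.2.le.trans hle⟩

end ParkingFunctions

section Contraction

variable {V : Type} [DecidableEq V] {r u : V}

def mergeInto (h : r ≠ u) (v : V) : {v : V // v ≠ u} :=
  if hv : v = u then ⟨r, h⟩ else ⟨v, hv⟩

theorem mergeInto_self (h : r ≠ u) : mergeInto h u = ⟨r, h⟩ := dif_pos rfl

theorem mergeInto_of_ne (h : r ≠ u) {v : V} (hv : v ≠ u) : mergeInto h v = ⟨v, hv⟩ :=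
  dif_neg hv

theorem eq_of_mergeInto_eq (h : r ≠ u) {v : V} (hvr : v ≠ r) (hvu : v ≠ u) {x : V}
    (hx : mergeInto h x = mergeInto h v) : x = v := by
  by_cases hxu : x = u
  · rw [hxu, mergeInto_self, mergeInto_of_ne h hvu, Subtype.mk.injEq] at hx
    exact absurd hx.symm hvr
  · rwa [mergeInto_of_ne h hxu, mergeInto_of_ne h hvu, Subtype.mk.injEq] at hx

variable [Fintype V] {E : Multiset (Sym2 V)}

theorem outdeg_contract (h : r ≠ u) (he : s(r, u) ∈ E) {I : Finset {v : V // v ≠ u}}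
    {v : V} (hvr : v ≠ r) (hvu : v ≠ u) :
    outdeg ((E.erase s(r, u)).map (Sym2.map (mergeInto h))) I ⟨v, hvu⟩
      = outdeg E (univ.filter fun x => mergeInto h x ∈ I) v := by
  rw [← mergeInto_of_ne h hvu, outdeg_map_sym2Map _ _ _ fun x => eq_of_mergeInto_eq h hvr hvu,
    outdeg_erase_of_notMem he (by simp [hvr, hvu])]

theorem IsGPF.contract (h : r ≠ u) (he : s(r, u) ∈ E) {f : V → ℤ} (hf : IsGPF E r f) :
    IsGPF ((E.erase s(r, u)).map (Sym2.map (mergeInto h))) ⟨r, h⟩ (fun v => f v) := by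
  refine ⟨hf.1, fun I hI hrI => ?_⟩
  have hr : mergeInto h r = ⟨r, h⟩ := mergeInto_of_ne h h
  obtain ⟨⟨w, hwu⟩, hw⟩ := hI
  obtain ⟨v, hv, hbounds⟩ := hf.2 (univ.filter fun x => mergeInto h x ∈ I)
    ⟨w, by simpa [mergeInto_of_ne h hwu] using hw⟩ (by simpa [hr] using hrI)
  have hvu : v ≠ u := by
    rintro rfl
    exact hrI (by simpa [mergeInto_self] using hv)
  have hvr : v ≠ r := by
    rintro rfl
    exact hrI (by simpa [hr] using hv)
  refine ⟨⟨v, hvu⟩, by simpa [mergeInto_of_ne h hvu] using hv, ?_⟩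
  rwa [outdeg_contract h he hvr hvu]

theorem IsGPF.of_contract (h : r ≠ u) (he : s(r, u) ∈ E) {f : V → ℤ} (hfu : f u = 0)
    (hf : IsGPF ((E.erase s(r, u)).map (Sym2.map (mergeInto h))) ⟨r, h⟩ (fun v => f v)) :
    IsGPF E r f := by
  refine ⟨hf.1, fun I hI hrI => ?_⟩
  by_cases huI : u ∈ I
  · refine ⟨u, huI, hfu.ge, ?_⟩
    rw [hfu, outdeg_eq_outdeg_erase_add_one he hrI]
    positivity
  set I' := univ.filter fun w : {v : V // v ≠ u} => w.1 ∈ I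
  have hpreimage : univ.filter (fun x => mergeInto h x ∈ I') = I := by
    ext x
    by_cases hxu : x = u
    · simp [I', hxu, mergeInto_self, hrI, huI]
    · simp [I', mergeInto_of_ne h hxu]
  obtain ⟨x, hx⟩ := hI
  obtain ⟨⟨w, hwu⟩, hw, hbounds⟩ := hf.2 I'
    ⟨⟨x, fun hxu => huI (hxu ▸ hx)⟩, by simpa [I'] using hx⟩ (by simpa [I'] using hrI)
  have hwI : w ∈ I := by simpa [I'] using hw
  have hwr : w ≠ r := fun hwr => hrI (hwr ▸ hwI)
  refine ⟨w, hwI, ?_⟩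
  rwa [outdeg_contract h he hwr hwu, hpreimage] at hbounds

def isGPFEquivContract (h : r ≠ u) (he : s(r, u) ∈ E) :
    {f : V → ℤ // IsGPF E r f ∧ f u = 0} ≃
      {g : {v : V // v ≠ u} → ℤ //
        IsGPF ((E.erase s(r, u)).map (Sym2.map (mergeInto h))) ⟨r, h⟩ g} where
  toFun f := ⟨fun v => f.1 v, f.2.1.contract h he⟩
  invFun g := ⟨fun v => if hv : v = u then 0 else g.1 ⟨v, hv⟩, by
    refine ⟨IsGPF.of_contract h he (dif_pos rfl) ?_, dif_pos rfl⟩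
    convert g.2 using 1
    exact funext fun v => dif_neg v.2⟩
  left_inv f := by
    ext v
    by_cases hv : v = u
    · simp [hv, f.2.2]
    · simp [hv]
  right_inv g := by
    ext v
    simp [v.2]

end Contraction

section Deletion

variable {V : Type} [Fintype V] [DecidableEq V] {E : Multiset (Sym2 V)} {r u : V}

theorem isGPF_iff_isGPF_erase_sub_single (h : r ≠ u) (he : s(r, u) ∈ E) {f : V → ℤ}
    (hfu : 1 ≤ f u) :
    IsGPF E r f ↔ IsGPF (E.erase s(r, u)) r (f - Pi.single u 1) := by
  set g : V → ℤ := f - Pi.single u 1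
  have hbounds : ∀ I : Finset V, r ∉ I → ∀ v ∈ I,
      (0 ≤ f v ∧ f v < outdeg E I v) ↔ (0 ≤ g v ∧ g v < outdeg (E.erase s(r, u)) I v) := by
    intro I hrI v hv
    by_cases hvu : v = u
    · subst hvu
      rw [outdeg_eq_outdeg_erase_add_one he hrI]
      simp only [g, Pi.sub_apply, Pi.single_eq_same]
      push_cast
      omega
    · have hvr : v ≠ r := by
        rintro rfl
        exact hrI hv
      rw [outdeg_erase_of_notMem he (by simp [hvr, hvu])]
      simp [g, hvu]
  refine and_congr (by simp [g, h]) (forall₃_congr fun I _ hrI => ?_)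
  exact exists_congr fun v => and_congr_right fun hv => hbounds I hrI v hv

def isGPFEquivErase (h : r ≠ u) (he : s(r, u) ∈ E) :
    {f : V → ℤ // IsGPF E r f ∧ ¬ f u = 0} ≃ {g : V → ℤ // IsGPF (E.erase s(r, u)) r g} :=
  (Equiv.subRight (Pi.single u 1)).subtypeEquiv fun f => by
    constructor
    · rintro ⟨hf, hfu⟩
      have := (hf.mem_Ico_outdeg_singleton h.symm).1
      exact (isGPF_iff_isGPF_erase_sub_single h he (by omega)).1 hf
    · intro hg
      have hfu : 1 ≤ f u := by
        have := (hg.mem_Ico_outdeg_singleton h.symm).1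
        simp only [Equiv.subRight_apply, Pi.sub_apply, Pi.single_eq_same] at this
        omega
      exact ⟨(isGPF_iff_isGPF_erase_sub_single h he hfu).2 hg, by omega⟩

end Deletion

theorem parallel_edge_partition_general (n : ℕ) (E : Multiset (Sym2 (Fin (n + 1))))
    (u : Fin (n + 1)) (hu : u ≠ 0)
    (hmu : 2 ≤ E.count s(0, u)) :
    Nat.card {f : Fin (n + 1) → ℤ // IsGPF E 0 f}
      = Nat.card {g : {v : Fin (n + 1) // v ≠ u} → ℤ // IsGPF
          ((E.erase s(0, u)).map (Sym2.map
            (fun v => if h : v = u then (⟨0, hu.symm⟩ : {v : Fin (n + 1) // v ≠ u}) else ⟨v, h⟩)))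
          (⟨0, hu.symm⟩ : {v : Fin (n + 1) // v ≠ u}) g}
        + Nat.card {g : Fin (n + 1) → ℤ // IsGPF (E.erase s(0, u)) 0 g} := by
  have he : s(0, u) ∈ E := Multiset.count_pos.mp (by omega)
  rw [Nat.card_eq_card_and_add_card_and_not _ fun f => f u = 0]
  -- `mergeInto hu.symm` unfolds to the vertex map of the contraction in the statement.
  exact congrArg₂ (· + ·) (Nat.card_congr (isGPFEquivContract hu.symm he))
    (Nat.card_congr (isGPFEquivErase hu.symm he))

/-- if there are at least two parallel edges between `0` and `u` and
`e` is one of them, then `|P_G| = |P_{G/e}| + |P_{G-e}|`. -/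
theorem parallel_edge_partition (n : ℕ) (E : Multiset (Sym2 (Fin (n + 1))))
    (hconn : (mAdj E).Connected) (u : Fin (n + 1)) (hu : u ≠ 0)
    (hmu : 2 ≤ E.count s(0, u)) :
    Nat.card {f : Fin (n + 1) → ℤ // IsGPF E 0 f}
      = Nat.card {g : {v : Fin (n + 1) // v ≠ u} → ℤ // IsGPF
          ((E.erase s(0, u)).map (Sym2.map
            (fun v => if h : v = u then (⟨0, hu.symm⟩ : {v : Fin (n + 1) // v ≠ u}) else ⟨v, h⟩)))
          (⟨0, hu.symm⟩ : {v : Fin (n + 1) // v ≠ u}) g}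
        + Nat.card {g : Fin (n + 1) → ℤ // IsGPF (E.erase s(0, u)) 0 g} :=
  parallel_edge_partition_general n E u hu hmu
end
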